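/- Let 𝒬P be a quantified logic program over a set of atoms 𝒜. Then 𝒬P is satisfiable if and only if the ASP(Q) program aspq(𝒬P) is coherent. -/

import Mathlib

namespace ASP

universe u v

variable {α : Type u} {β : Type v}

/-- A literal over atoms `α`: an atom or its default negation. -/
inductive Lit (α : Type u) where
  | pos (a : α)
  | neg (a : α)

/-- Satisfaction of a literal by a set of atoms. -/
def Lit.sat (X : Set α) : Lit α → Prop
  | .pos a => a ∈ X
  | .neg a => a ∉ X

/-- The atom occurring in a literal. -/
def Lit.atomOf : Lit α → α
  | .pos a => a
  | .neg a => a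

/-- The head of a rule: an atom (normal rule), a choice `{p}`, or `⊥` (constraint). -/
inductive Head (α : Type u) where
  | atom (a : α)
  | choice (a : α)
  | bot

def Head.atoms : Head α → Set α
  | .atom a => {a}
  | .choice a => {a}
  | .bot => ∅

/-- A rule `H ← B` with head `H` and body `B`, a set of literals. -/
structure Rule (α : Type u) where
  head : Head α
  body : Set (Lit α)

/-- A logic program is a set of rules. -/
abbrev Program (α : Type u) := Set (Rule α)

def ruleAtoms (r : Rule α) : Set α := r.head.atoms ∪ Lit.atomOf '' r.body

def progAtoms (P : Program α) : Set α := ⋃ r ∈ P, ruleAtoms r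

/-- `M` satisfies the `X`-reduct of a literal, i.e. the literal where any literal
not satisfied by `X` has been replaced by `⊥`. -/
def Lit.redSat (X M : Set α) (l : Lit α) : Prop := l.sat X ∧ l.sat M

/-- `M` satisfies the `X`-reduct of a head (`{p}` is read as `p ∨ ¬ p`). -/
def Head.redSat (X M : Set α) : Head α → Prop
  | .atom a => a ∈ X ∧ a ∈ M
  | .choice a => (a ∈ X ∧ a ∈ M) ∨ (a ∉ X ∧ a ∉ M)
  | .bot => False

/-- `M` is a model of the formula obtained from `P` by replacing every literal
not satisfied by `X` with `⊥`. -/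
def redModel (P : Program α) (X M : Set α) : Prop :=
  ∀ r ∈ P, (∀ l ∈ r.body, l.redSat X M) → r.head.redSat X M

/-- `X` is a stable model of `P`: a subset-minimal model of the `X`-reduct of `P`. -/
def StableModel (P : Program α) (X : Set α) : Prop :=
  redModel P X X ∧ ∀ M, M ⊆ X → redModel P X M → M = X

/-- The set of stable models of a program. -/
def SM (P : Program α) : Set (Set α) := {X | StableModel P X}

/-- A program is satisfiable if it has a stable model. -/
def Satisfiable (P : Program α) : Prop := ∃ X, StableModel P X

def Head.clSat (M : Set α) : Head α → Prop
  | .atom a => a ∈ M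
  | .choice _ => True
  | .bot => False

/-- `M` is a (classical) model of `P`, reading rules as implications. -/
def IsModel (P : Program α) (M : Set α) : Prop :=
  ∀ r ∈ P, (∀ l ∈ r.body, l.sat M) → r.head.clSat M

/-- `fixcons X Y = {⊥ ← not x | x ∈ X} ∪ {⊥ ← x | x ∈ Y \ X}`. -/
def fixcons (X Y : Set α) : Program α :=
  {r | (∃ x ∈ X, r = ⟨Head.bot, {Lit.neg x}⟩) ∨ (∃ x ∈ Y \ X, r = ⟨Head.bot, {Lit.pos x}⟩)}

/-- A set of atoms identified with the corresponding facts. -/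
def factsOf (X : Set α) : Program α := {r | ∃ x ∈ X, r = ⟨Head.atom x, ∅⟩}

/-- Quantifiers. -/
inductive Quant where
  | ex
  | fa

/-- Satisfiability of a quantified logic program, given by its prefix (a list of
quantified sets of atoms) and its program. -/
def QLPSat : List (Quant × Set α) → Program α → Prop
  | [], P => Satisfiable P
  | (Quant.ex, X) :: Q, P => ∃ Y, Y ⊆ X ∧ QLPSat Q (P ∪ fixcons Y X)
  | (Quant.fa, X) :: Q, P => ∀ Y, Y ⊆ X → QLPSat Q (P ∪ fixcons Y X)

/-- `r` has head atom `p` (either `p` or `{p}`). -/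
def headAtomIs (r : Rule α) (p : α) : Prop :=
  r.head = Head.atom p ∨ r.head = Head.choice p

def posEdge (P : Program α) (p q : α) : Prop :=
  ∃ r ∈ P, headAtomIs r q ∧ Lit.pos p ∈ r.body

def negEdge (P : Program α) (p q : α) : Prop :=
  ∃ r ∈ P, headAtomIs r q ∧ Lit.neg p ∈ r.body

def depEdge (P : Program α) (p q : α) : Prop := posEdge P p q ∨ negEdge P p q

/-- The dependency graph of `P` has no cycle involving a negative edge. -/
def Stratified (P : Program α) : Prop :=
  ¬ ∃ p q, negEdge P p q ∧ Relation.ReflTransGen (depEdge P) q p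

/-- `P` is in GDT form: it is stratified and all its choice rules have the form
`{p} ←` with `p` occurring in the head of no other rule. -/
def GDT (P : Program α) : Prop :=
  Stratified P ∧ ∀ r ∈ P, ∀ p, r.head = Head.choice p →
    r.body = ∅ ∧ ∀ r' ∈ P, r' ≠ r → ¬ headAtomIs r' p

/-- A clause: a set of literals. -/
abbrev Clause (α : Type u) := Set (Lit α)

/-- A CNF formula: a set of clauses. -/
abbrev CNF (α : Type u) := Set (Clause α)

def clauseSat (M : Set α) (c : Clause α) : Prop := ∃ l ∈ c, l.sat M

def CnfModel (φ : CNF α) (M : Set α) : Prop := ∀ c ∈ φ, clauseSat M c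

def CnfSat (φ : CNF α) : Prop := ∃ M, CnfModel φ M

def clauseAtoms (c : Clause α) : Set α := Lit.atomOf '' c

def cnfAtoms (φ : CNF α) : Set α := ⋃ c ∈ φ, clauseAtoms c

/-- `fixbf X Y = {{p} | p ∈ X} ∪ {{¬p} | p ∈ Y \ X}`. -/
def fixbf (X Y : Set α) : CNF α :=
  {c | (∃ p ∈ X, c = {Lit.pos p}) ∨ (∃ p ∈ Y \ X, c = {Lit.neg p})}

/-- Satisfiability of a QBF in prenex CNF, given by prefix and matrix. -/
def QBFSat : List (Quant × Set α) → CNF α → Prop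
  | [], φ => CnfSat φ
  | (Quant.ex, X) :: Q, φ => ∃ Y, Y ⊆ X ∧ QBFSat Q (φ ∪ fixbf Y X)
  | (Quant.fa, X) :: Q, φ => ∀ Y, Y ⊆ X → QBFSat Q (φ ∪ fixbf Y X)

def mapLit (g : α → β) : Lit α → Lit β
  | .pos a => .pos (g a)
  | .neg a => .neg (g a)

def mapHead (g : α → β) : Head α → Head β
  | .atom a => .atom (g a)
  | .choice a => .choice (g a)
  | .bot => .bot

def mapRule (g : α → β) (r : Rule α) : Rule β :=
  ⟨mapHead g r.head, mapLit g '' r.body⟩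

/-- Rename the atoms of a program along `g`. -/
def mapProg (g : α → β) (P : Program α) : Program β := mapRule g '' P

/-- Add the literals in `L` to the body of every rule of `P`. -/
def addBody (L : Set (Lit α)) (P : Program α) : Program α :=
  {r | ∃ r' ∈ P, r = ⟨r'.head, r'.body ∪ L⟩}

def replBotHead (p : α) : Rule α → Rule α
  | ⟨Head.bot, B⟩ => ⟨Head.atom p, B⟩
  | r => r

/-- Replace `⊥` in the head of every integrity constraint of `P` by the atom `p`. -/
def botTo (p : α) (P : Program α) : Program α := replBotHead p '' P

def choiceRules (P : Program α) : Program α := {r ∈ P | ∃ p, r.head = Head.choice p}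

def normalRules (P : Program α) : Program α := {r ∈ P | ∃ p, r.head = Head.atom p}

def constraintRules (P : Program α) : Program α := {r ∈ P | r.head = Head.bot}

end ASP
namespace ASP

variable {α : Type u}

/-- `fixfact X Y = {x ← | x ∈ X} ∪ {⊥ ← x | x ∈ Y \ X}`. -/
def fixfact (X Y : Set α) : Program α :=
  factsOf X ∪ {r | ∃ x ∈ Y \ X, r = ⟨Head.bot, {Lit.pos x}⟩}

/-- Coherence of an ASP(Q) program `□₀P₀ ⋯ □ₙPₙ : C`, given by the list of its
quantified programs and the constraint program `C`. -/
def Coherent : List (Quant × Program α) → Program α → Prop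
  | [], C => Satisfiable C
  | [(Quant.ex, P)], C => ∃ M, StableModel P M ∧ Satisfiable (C ∪ fixfact M (progAtoms P))
  | [(Quant.fa, P)], C => ∀ M, StableModel P M → Satisfiable (C ∪ fixfact M (progAtoms P))
  | (Quant.ex, P) :: Q :: rest, C =>
      ∃ M, StableModel P M ∧ Coherent ((Q.1, Q.2 ∪ fixfact M (progAtoms P)) :: rest) C
  | (Quant.fa, P) :: Q :: rest, C =>
      ∀ M, StableModel P M → Coherent ((Q.1, Q.2 ∪ fixfact M (progAtoms P)) :: rest) C
termination_by l _ => l.length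

/-- Normal form: head atoms of `Pⱼ` do not occur in any previous `Pᵢ`
(the constraint program is required to be empty separately). -/
def NormalForm (L : List (Quant × Program α)) : Prop :=
  ∀ i j (hij : i < j) (hj : j < L.length), ∀ r ∈ (L.get ⟨j, hj⟩).2, ∀ p,
    headAtomIs r p → p ∉ progAtoms (L.get ⟨i, hij.trans hj⟩).2

/-- The atoms occurring in the programs before position `i`. -/
def prevAtoms (L : List (Quant × Program α)) (i : ℕ) : Set α :=
  {a | ∃ q ∈ L.take i, a ∈ progAtoms q.2}

/-- The set `Xᵢ` of the prefix of `qlp(Π)`. -/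
def qlpX (L : List (Quant × Program α)) (i : ℕ) (q : Quant) (P : Program α) : Set (α ⊕ ℕ) :=
  match q with
  | Quant.ex => Sum.inl '' (progAtoms P \ prevAtoms L i)
  | Quant.fa => Sum.inl '' {p | (⟨Head.choice p, ∅⟩ : Rule α) ∈ P}

/-- The program `Pᵢ•` of `qlp(Π)`; `Sum.inr i` plays the role of the fresh atom `αᵢ`. -/
def qlpP (L : List (Quant × Program α)) (i : ℕ) (q : Quant) (P : Program α) :
    Program (α ⊕ ℕ) :=
  match q with
  | Quant.ex =>
      if L.length = 1 then mapProg Sum.inl P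
      else addBody {Lit.neg (Sum.inr i)} (mapProg Sum.inl P)
  | Quant.fa => botTo (Sum.inr i) (mapProg Sum.inl P)

/-- `β = 1` if `□₀ = ∀ˢᵗ` and `β = 2` otherwise. -/
def qlpBeta (L : List (Quant × Program α)) : ℕ :=
  match L with
  | (Quant.fa, _) :: _ => 1
  | _ => 2

/-- `O = {αᵢ ← αᵢ₋₁ | β ≤ i ≤ n}`. -/
def qlpO (L : List (Quant × Program α)) : Program (α ⊕ ℕ) :=
  {r | ∃ i, qlpBeta L ≤ i ∧ i ≤ L.length - 1 ∧
       r = ⟨Head.atom (Sum.inr i), {Lit.pos (Sum.inr (i - 1))}⟩}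

/-- The prefix of `qlp(Π)`. -/
def qlpPrefix (L : List (Quant × Program α)) : List (Quant × Set (α ⊕ ℕ)) :=
  (L.zipIdx.map Prod.swap).map fun ix => (ix.2.1, qlpX L ix.1 ix.2.1 ix.2.2)

/-- The program of `qlp(Π)`: `P₀• ∪ … ∪ Pₙ• ∪ O`. -/
def qlpProg (L : List (Quant × Program α)) : Program (α ⊕ ℕ) :=
  {r | ∃ ix ∈ L.zipIdx.map Prod.swap, r ∈ qlpP L ix.1 ix.2.1 ix.2.2} ∪ qlpO L

/-- The constraints `O` of `aspq(𝒬P)`, linking original and primed atoms;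
`Sum.inr p` plays the role of the fresh primed atom `p'`. -/
def aspqO (Qs : List (Quant × Set α)) : Program (α ⊕ α) :=
  {r | ∃ p, (∃ X ∈ Qs.map Prod.snd, p ∈ X) ∧
    (r = ⟨Head.bot, {Lit.pos (Sum.inl p), Lit.neg (Sum.inr p)}⟩ ∨
     r = ⟨Head.bot, {Lit.neg (Sum.inl p), Lit.pos (Sum.inr p)}⟩)}

/-- `aspq(𝒬P) = Q₀ˢᵗP₀ … QₙˢᵗPₙ ∃ˢᵗ(P ∪ O)` with `Pᵢ = {{p'} ← | p ∈ Xᵢ}`. -/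
def aspqList (Qs : List (Quant × Set α)) (P : Program α) : List (Quant × Program (α ⊕ α)) :=
  (Qs.map fun qX =>
    (qX.1, ({r | ∃ p ∈ qX.2, r = ⟨Head.choice (Sum.inr p), ∅⟩} : Program (α ⊕ α))))
  ++ [(Quant.ex, mapProg Sum.inl P ∪ aspqO Qs)]

end ASP

/-!
Both sides quantify over the same choices. Once the primed copies of the earlier blocks `W`
are fixed to `Y'` by `fixfact`, the stable models of `{p'} ← (p ∈ X)` are exactly the sets
`(Y ∪ Z)'` with `Z ⊆ X`, matching the choice of `Z ⊆ X` in the QLP; hence, block by block,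
`QLPSat` and `Coherent` unfold in lockstep. At the end, the primed atoms enter `P ∪ O` only as
facts, so the stable models of the last program are `M ∪ Y'` with `M ∈ SM(P)`, and `O` keeps
exactly those with `M ∩ 𝒳 = Y`, which is what `fixcons Y 𝒳` does to `P`: integrity constraints
only filter stable models.
-/

namespace ASP

variable {α β γ σ τ : Type*}

theorem forall_mem_setOf_exists_eq {f : σ → τ} {A : Set σ} {Q : τ → Prop} :
    (∀ r ∈ {r | ∃ x ∈ A, r = f x}, Q r) ↔ ∀ x ∈ A, Q (f x) :=
  ⟨fun h x hx => h _ ⟨x, hx, rfl⟩, by rintro h _ ⟨x, hx, rfl⟩; exact h x hx⟩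

section StableModels

variable {P Q K : Program β} {X M : Set β}

theorem redModel_union : redModel (P ∪ Q) X M ↔ redModel P X M ∧ redModel Q X M := by
  simp only [redModel, Set.mem_union, or_imp, forall_and]

theorem isModel_union : IsModel (P ∪ Q) M ↔ IsModel P M ∧ IsModel Q M := by
  simp only [IsModel, Set.mem_union, or_imp, forall_and]

theorem IsModel.of_redModel_self (h : redModel P M M) : IsModel P M := by
  intro r hr hb
  have hhead := h r hr fun l hl => ⟨hb l hl, hb l hl⟩
  rcases r with ⟨_ | _ | _, _⟩ <;> simp_all [Head.redSat, Head.clSat]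

theorem stableModel_union_constraints (hK : ∀ r ∈ K, r.head = Head.bot) :
    StableModel (P ∪ K) M ↔ StableModel P M ∧ IsModel K M := by
  have hred : IsModel K M → ∀ N, redModel K M N := by
    intro hKM N r hr hb
    have := hKM r hr fun l hl => (hb l hl).1
    simp [hK r hr, Head.clSat] at this
  constructor
  · rintro ⟨hMM, hmin⟩
    rw [redModel_union] at hMM
    have hKM := IsModel.of_redModel_self hMM.2
    exact ⟨⟨hMM.1, fun N hN hPN => hmin N hN (redModel_union.2 ⟨hPN, hred hKM N⟩)⟩, hKM⟩
  · rintro ⟨⟨hMM, hmin⟩, hKM⟩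
    exact ⟨redModel_union.2 ⟨hMM, hred hKM M⟩,
      fun N hN hPKN => hmin N hN (redModel_union.1 hPKN).1⟩

end StableModels

def choiceRulesOn (A : Set β) : Program β := {r | ∃ p ∈ A, r = ⟨Head.choice p, ∅⟩}

def denials (A : Set β) : Program β := {r | ∃ x ∈ A, r = ⟨Head.bot, {Lit.pos x}⟩}

section FactsAndChoices

variable {A B C M : Set β}

theorem fixfact_eq_factsOf_union_denials : fixfact B C = factsOf B ∪ denials (C \ B) := rfl

theorem fixfact_empty : fixfact (∅ : Set β) ∅ = ∅ := by
  ext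
  simp [fixfact, factsOf]

theorem head_eq_bot_of_mem_denials {r : Rule β} (hr : r ∈ denials A) : r.head = Head.bot := by
  obtain ⟨x, -, rfl⟩ := hr
  rfl

theorem isModel_denials : IsModel (denials A) M ↔ Disjoint A M := by
  simp only [IsModel, denials, forall_mem_setOf_exists_eq]
  simp [Set.disjoint_left, Lit.sat, Head.clSat]

theorem redModel_factsOf {X : Set β} : redModel (factsOf B) X M ↔ B ⊆ X ∧ B ⊆ M := by
  simp only [redModel, factsOf, forall_mem_setOf_exists_eq]
  simp [Head.redSat, Set.subset_def, forall_and]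

theorem progAtoms_union (P Q : Program β) : progAtoms (P ∪ Q) = progAtoms P ∪ progAtoms Q :=
  Set.biUnion_union P Q ruleAtoms

theorem progAtoms_choiceRulesOn : progAtoms (choiceRulesOn A) = A := by
  ext; simp [progAtoms, choiceRulesOn, ruleAtoms, Head.atoms]

theorem progAtoms_factsOf : progAtoms (factsOf A) = A := by
  ext; simp [progAtoms, factsOf, ruleAtoms, Head.atoms]

theorem progAtoms_denials : progAtoms (denials A) = A := by
  ext; simp [progAtoms, denials, ruleAtoms, Head.atoms, Lit.atomOf]

theorem progAtoms_fixfact (h : B ⊆ C) : progAtoms (fixfact B C) = C := by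
  rw [fixfact_eq_factsOf_union_denials, progAtoms_union, progAtoms_factsOf, progAtoms_denials,
    Set.union_sdiff_cancel h]

theorem stableModel_factsOf : StableModel (factsOf B) B := by
  refine ⟨redModel_factsOf.2 ⟨le_rfl, le_rfl⟩, fun N hNB hN => hNB.antisymm ?_⟩
  exact (redModel_factsOf.1 hN).2

theorem stableModel_fixfact_self (C : Set β) : StableModel (fixfact B C) B := by
  rw [fixfact_eq_factsOf_union_denials, stableModel_union_constraints
    fun _ => head_eq_bot_of_mem_denials, isModel_denials]
  exact ⟨stableModel_factsOf, Set.disjoint_sdiff_left⟩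

theorem stableModel_choiceRulesOn_union_factsOf :
    StableModel (choiceRulesOn A ∪ factsOf B) M ↔ B ⊆ M ∧ M ⊆ A ∪ B := by
  have hred : ∀ N, redModel (choiceRulesOn A ∪ factsOf B) M N ↔
      (∀ p ∈ A, (p ∈ M ↔ p ∈ N)) ∧ B ⊆ M ∧ B ⊆ N := by
    intro N
    rw [redModel_union, redModel_factsOf]
    simp only [redModel, choiceRulesOn, forall_mem_setOf_exists_eq]
    simp [Head.redSat, ← iff_iff_and_or_not_and_not]
  simp only [StableModel, hred, iff_self, implies_true, true_and, and_self]
  constructor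
  · rintro ⟨hBM, hmin⟩
    have hN := hmin (M ∩ (A ∪ B)) Set.inter_subset_left
      ⟨fun p hp => by simp [hp], hBM, Set.subset_inter hBM Set.subset_union_right⟩
    exact ⟨hBM, hN ▸ Set.inter_subset_right⟩
  · rintro ⟨hBM, hMAB⟩
    refine ⟨hBM, fun N hNM ⟨hAN, _, hBN⟩ => hNM.antisymm fun x hx => ?_⟩
    rcases hMAB hx with hxA | hxB
    exacts [(hAN x hxA).1 hx, hBN hxB]

end FactsAndChoices

section Renaming

theorem Lit.sat_mapLit (g : γ → β) (X : Set β) (l : Lit γ) :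
    (mapLit g l).sat X ↔ l.sat (g ⁻¹' X) := by
  cases l <;> rfl

theorem Head.redSat_mapHead (g : γ → β) (X M : Set β) (h : Head γ) :
    (mapHead g h).redSat X M ↔ h.redSat (g ⁻¹' X) (g ⁻¹' M) := by
  cases h <;> rfl

theorem redModel_mapProg (g : γ → β) (P : Program γ) (X M : Set β) :
    redModel (mapProg g P) X M ↔ redModel P (g ⁻¹' X) (g ⁻¹' M) := by
  simp only [redModel, mapProg, mapRule, Set.forall_mem_image, Lit.redSat, Lit.sat_mapLit,
    Head.redSat_mapHead]

theorem stableModel_mapProg_inl_union_factsOf {P : Program α} {Y : Set γ} {M : Set (α ⊕ γ)} :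
    StableModel (mapProg Sum.inl P ∪ factsOf (Sum.inr '' Y)) M ↔
      ∃ S, StableModel P S ∧ Sum.inl '' S ∪ Sum.inr '' Y = M := by
  have hred : ∀ N, redModel (mapProg Sum.inl P ∪ factsOf (Sum.inr '' Y)) M N ↔
      redModel P (Sum.inl ⁻¹' M) (Sum.inl ⁻¹' N) ∧ Sum.inr '' Y ⊆ M ∧ Sum.inr '' Y ⊆ N := by
    intro N
    rw [redModel_union, redModel_mapProg, redModel_factsOf]
  have hpre : ∀ S, Sum.inl ⁻¹' (Sum.inl '' S ∪ Sum.inr '' Y : Set (α ⊕ γ)) = S := by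
    intro S
    simp [Set.preimage_image_eq _ Sum.inl_injective]
  constructor
  · rintro ⟨hMM, hmin⟩
    simp only [hred] at hMM hmin
    obtain ⟨hP, hYM, -⟩ := hMM
    set S := Sum.inl ⁻¹' M
    have hSM : ∀ T ⊆ S, (Sum.inl '' T ∪ Sum.inr '' Y : Set (α ⊕ γ)) ⊆ M := fun T hTS =>
      Set.union_subset ((Set.image_mono hTS).trans (Set.image_preimage_subset _ _)) hYM
    have hMeq : Sum.inl '' S ∪ Sum.inr '' Y = M :=
      hmin _ (hSM S le_rfl) ⟨by rwa [hpre], hYM, Set.subset_union_right⟩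
    refine ⟨S, ⟨hP, fun T hTS hT => ?_⟩, hMeq⟩
    have hTM := hmin _ (hSM T hTS) ⟨by rwa [hpre], hYM, Set.subset_union_right⟩
    rw [← hpre T, hTM]
  · rintro ⟨S, ⟨hSS, hmin⟩, rfl⟩
    refine ⟨(hred _).2 ⟨by rwa [hpre], Set.subset_union_right, Set.subset_union_right⟩,
      fun N hNM hN => hNM.antisymm ?_⟩
    rw [hred, hpre] at hN
    obtain ⟨hSN, -, hYN⟩ := hN
    have hNS := hmin _ (by simpa [hpre] using Set.preimage_mono (f := Sum.inl) hNM) hSN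
    exact Set.union_subset (hNS ▸ Set.image_preimage_subset _ _) hYN

end Renaming

section Fixcons

variable {Y W Z X S : Set α}

theorem fixcons_empty : fixcons (∅ : Set α) ∅ = ∅ := by
  ext
  simp [fixcons]

theorem head_eq_bot_of_mem_fixcons {r : Rule α} (hr : r ∈ fixcons Y X) : r.head = Head.bot := by
  obtain ⟨x, -, rfl⟩ | ⟨x, -, rfl⟩ := hr <;> rfl

theorem isModel_fixcons : IsModel (fixcons Y X) S ↔ Y ⊆ S ∧ Disjoint (X \ Y) S := by
  constructor
  · intro hS
    refine ⟨fun x hx => ?_, Set.disjoint_left.2 fun x hx hxS => ?_⟩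
    · by_contra h
      exact hS _ (Or.inl ⟨x, hx, rfl⟩) (by simp [Lit.sat, h])
    · exact hS _ (Or.inr ⟨x, hx, rfl⟩) (by simp [Lit.sat, hxS])
  · rintro ⟨hYS, hXS⟩ r (⟨x, hx, rfl⟩ | ⟨x, hx, rfl⟩) hb
    · simp [Lit.sat, hYS hx] at hb
    · simp [Lit.sat, Set.disjoint_left.1 hXS hx] at hb

theorem fixcons_union_fixcons (hYW : Y ⊆ W) (hZX : Z ⊆ X) (hWX : Disjoint W X) :
    fixcons Y W ∪ fixcons Z X = fixcons (Y ∪ Z) (W ∪ X) := by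
  have hdiff : (W ∪ X) \ (Y ∪ Z) = W \ Y ∪ X \ Z := by
    ext x
    have hxWX : x ∈ W → x ∉ X := fun h => Set.disjoint_left.1 hWX h
    have hxYW : x ∈ Y → x ∈ W := fun h => hYW h
    have hxZX : x ∈ Z → x ∈ X := fun h => hZX h
    simp only [Set.mem_sdiff, Set.mem_union]
    tauto
  ext r
  simp only [fixcons, Set.mem_union, Set.mem_ofPred_eq, hdiff, or_and_right, exists_or]
  exact or_or_or_comm

end Fixcons

section Coherence

def Quant.Holds : Quant → (σ → Prop) → (σ → Prop) → Prop
  | .ex, D, φ => ∃ s, D s ∧ φ s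
  | .fa, D, φ => ∀ s, D s → φ s

theorem Quant.holds_congr (q : Quant) {D : σ → Prop} {D' : τ → Prop} {φ : σ → Prop}
    {ψ : τ → Prop} (f : σ → τ) (hf : ∀ t, D' t ↔ ∃ s, D s ∧ f s = t)
    (h : ∀ s, D s → (φ s ↔ ψ (f s))) : q.Holds D φ ↔ q.Holds D' ψ := by
  cases q
  · exact ⟨fun ⟨s, hs, hφ⟩ => ⟨f s, (hf _).2 ⟨s, hs, rfl⟩, (h s hs).1 hφ⟩,
      fun ⟨t, ht, hψ⟩ => let ⟨s, hs, hst⟩ := (hf t).1 ht; ⟨s, hs, (h s hs).2 (hst ▸ hψ)⟩⟩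
  · exact ⟨fun hφ t ht => let ⟨s, hs, hst⟩ := (hf t).1 ht; hst ▸ (h s hs).1 (hφ s hs),
      fun hψ s hs => (h s hs).2 (hψ _ ((hf _).2 ⟨s, hs, rfl⟩))⟩

theorem qlpSat_cons (q : Quant) (X : Set α) (Qs : List (Quant × Set α)) (P : Program α) :
    QLPSat ((q, X) :: Qs) P ↔ q.Holds (· ⊆ X) fun Y => QLPSat Qs (P ∪ fixcons Y X) := by
  cases q <;> rfl

def addToHead (F : Program β) : List (Quant × Program β) → List (Quant × Program β)
  | [] => []
  | A :: L => (A.1, A.2 ∪ F) :: L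

theorem addToHead_empty (L : List (Quant × Program β)) : addToHead ∅ L = L := by
  cases L <;> simp [addToHead]

theorem coherent_cons (q : Quant) (A : Program β) {L : List (Quant × Program β)} (hL : L ≠ [])
    (C : Program β) :
    Coherent ((q, A) :: L) C ↔
      q.Holds (StableModel A) fun M => Coherent (addToHead (fixfact M (progAtoms A)) L) C := by
  obtain ⟨B, L, rfl⟩ := List.exists_cons_of_ne_nil hL
  cases q <;> rw [Coherent] <;> rfl

theorem coherent_singleton_ex_empty (A : Program β) :
    Coherent [(Quant.ex, A)] ∅ ↔ Satisfiable A := by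
  rw [Coherent]
  exact ⟨fun ⟨M, hM, _⟩ => ⟨M, hM⟩,
    fun ⟨M, hM⟩ => ⟨M, hM, ⟨M, by simpa using stableModel_fixfact_self _⟩⟩⟩

end Coherence

section Encoding

/-- The constraints `O` of `aspq(𝒬P)` for the atoms in `V`, with `p' = Sum.inr p`. -/
def linkConstraints (V : Set α) : Program (α ⊕ α) :=
  {r | ∃ p ∈ V,
    r = ⟨Head.bot, {Lit.pos (Sum.inl p), Lit.neg (Sum.inr p)}⟩ ∨
    r = ⟨Head.bot, {Lit.neg (Sum.inl p), Lit.pos (Sum.inr p)}⟩}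

theorem aspqO_eq_linkConstraints (Qs : List (Quant × Set α)) :
    aspqO Qs = linkConstraints (⋃ s ∈ Qs, s.2) := by
  ext r
  simp only [aspqO, linkConstraints, List.mem_map, Set.mem_iUnion, exists_prop]
  aesop

theorem head_eq_bot_of_mem_linkConstraints {V : Set α} {r : Rule (α ⊕ α)}
    (hr : r ∈ linkConstraints V) : r.head = Head.bot := by
  obtain ⟨p, -, rfl | rfl⟩ := hr <;> rfl

theorem isModel_linkConstraints {V : Set α} {M : Set (α ⊕ α)} :
    IsModel (linkConstraints V) M ↔ ∀ p ∈ V, (Sum.inl p ∈ M ↔ Sum.inr p ∈ M) := by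
  constructor
  · intro hM p hp
    constructor <;> intro h <;> by_contra h'
    · exact hM _ ⟨p, hp, Or.inl rfl⟩ (by simp [Lit.sat, h, h'])
    · exact hM _ ⟨p, hp, Or.inr rfl⟩ (by simp [Lit.sat, h, h'])
  · rintro h r ⟨p, hp, rfl | rfl⟩ hb <;> simp [Lit.sat, h p hp] at hb

/-- The program `Pᵢ` of `aspq(𝒬P)` for the block `X`, once the primed atoms of the earlier
blocks `W` have been fixed to `Y'`. -/
def choiceLayer (X Y W : Set α) : Program (α ⊕ α) :=
  choiceRulesOn (Sum.inr '' X) ∪ fixfact (Sum.inr '' Y) (Sum.inr '' W)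

theorem progAtoms_choiceLayer {X Y W : Set α} (hYW : Y ⊆ W) :
    progAtoms (choiceLayer X Y W) = Sum.inr '' (W ∪ X) := by
  rw [choiceLayer, progAtoms_union, progAtoms_choiceRulesOn,
    progAtoms_fixfact (Set.image_mono hYW), Set.image_union, Set.union_comm]

theorem stableModel_choiceLayer_iff {X Y W : Set α} (hWX : Disjoint W X) {M : Set (α ⊕ α)} :
    StableModel (choiceLayer X Y W) M ↔ ∃ Z ⊆ X, Sum.inr '' (Y ∪ Z) = M := by
  rw [choiceLayer, fixfact_eq_factsOf_union_denials, ← Set.union_assoc,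
    stableModel_union_constraints fun _ => head_eq_bot_of_mem_denials,
    stableModel_choiceRulesOn_union_factsOf, isModel_denials]
  constructor
  · rintro ⟨⟨hYM, hMXY⟩, -⟩
    refine ⟨X ∩ Sum.inr ⁻¹' M, Set.inter_subset_left, Set.Subset.antisymm ?_ fun x hx => ?_⟩
    · rintro _ ⟨a, ha | ⟨-, ha⟩, rfl⟩
      exacts [hYM ⟨a, ha, rfl⟩, ha]
    · obtain ⟨a, ha, rfl⟩ | ⟨a, ha, rfl⟩ := hMXY hx
      exacts [⟨a, Or.inr ⟨ha, hx⟩, rfl⟩, ⟨a, Or.inl ha, rfl⟩]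
  · rintro ⟨Z, hZX, rfl⟩
    refine ⟨⟨Set.image_mono Set.subset_union_left, ?_⟩, Set.disjoint_left.2 ?_⟩
    · rw [Set.image_union]
      exact Set.union_subset Set.subset_union_right
        ((Set.image_mono hZX).trans Set.subset_union_left)
    · rintro _ ⟨⟨p, hpW, rfl⟩, hpY⟩ ⟨q, hq, hqp⟩
      obtain rfl := Sum.inr_injective hqp
      rcases hq with hq | hq
      exacts [hpY ⟨_, hq, rfl⟩, Set.disjoint_left.1 hWX hpW (hZX hq)]

theorem satisfiable_aspqFinal_iff {P : Program α} {Y V : Set α} (hYV : Y ⊆ V) :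
    Satisfiable (mapProg Sum.inl P ∪ linkConstraints V ∪ fixfact (Sum.inr '' Y) (Sum.inr '' V)) ↔
      Satisfiable (P ∪ fixcons Y V) := by
  have hK : ∀ r ∈ linkConstraints V ∪ denials (Sum.inr '' V \ Sum.inr '' Y),
      r.head = Head.bot := by
    rintro r (hr | hr)
    exacts [head_eq_bot_of_mem_linkConstraints hr, head_eq_bot_of_mem_denials hr]
  have hfix : ∀ S, (∀ p ∈ V, (p ∈ S ↔ p ∈ Y)) ↔ Y ⊆ S ∧ Disjoint (V \ Y) S := by
    intro S
    simp only [Set.disjoint_left, Set.subset_def, Set.mem_sdiff]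
    exact ⟨fun h => ⟨fun p hp => (h p (hYV hp)).2 hp, fun p hp hpS => hp.2 ((h p hp.1).1 hpS)⟩,
      fun h p hp => ⟨fun hpS => by_contra fun hpY => h.2 ⟨hp, hpY⟩ hpS, fun hpY => h.1 p hpY⟩⟩
  have hdisj : ∀ S : Set α,
      Disjoint (Sum.inr '' V \ Sum.inr '' Y) (Sum.inl '' S ∪ Sum.inr '' Y) := by
    intro S
    rw [Set.disjoint_left]
    rintro _ ⟨⟨p, -, rfl⟩, hpY⟩ (⟨q, -, hq⟩ | hpY')
    exacts [Sum.inl_ne_inr hq, hpY hpY']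
  rw [fixfact_eq_factsOf_union_denials, Set.union_union_union_comm]
  simp only [Satisfiable, stableModel_union_constraints hK, stableModel_mapProg_inl_union_factsOf,
    stableModel_union_constraints fun _ => head_eq_bot_of_mem_fixcons, isModel_fixcons,
    exists_exists_and_eq_and, isModel_union, isModel_linkConstraints, isModel_denials, hdisj]
  simp [hfix]

/-- `aspqList` with `O` taken over a fixed set `V`, so that the prefix can be consumed block
by block while `O` stays the same. -/
def aspqListOn (V : Set α) (Qs : List (Quant × Set α)) (P : Program α) :
    List (Quant × Program (α ⊕ α)) :=
  Qs.map (fun qX => (qX.1, choiceRulesOn (Sum.inr '' qX.2)))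
    ++ [(Quant.ex, mapProg Sum.inl P ∪ linkConstraints V)]

theorem aspqList_eq_aspqListOn (Qs : List (Quant × Set α)) (P : Program α) :
    aspqList Qs P = aspqListOn (⋃ s ∈ Qs, s.2) Qs P := by
  have hchoice : ∀ X : Set α, choiceRulesOn (Sum.inr '' X : Set (α ⊕ α)) =
      {r | ∃ p ∈ X, r = ⟨Head.choice (Sum.inr p), ∅⟩} := by
    intro X
    ext r
    simp [choiceRulesOn]
  simp only [aspqList, aspqListOn, aspqO_eq_linkConstraints, hchoice]

theorem addToHead_aspqListOn_cons (V Y W : Set α) (q : Quant) (X : Set α)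
    (Qs : List (Quant × Set α)) (P : Program α) :
    addToHead (fixfact (Sum.inr '' Y) (Sum.inr '' W)) (aspqListOn V ((q, X) :: Qs) P) =
      (q, choiceLayer X Y W) :: aspqListOn V Qs P := rfl

theorem aspqListOn_ne_nil (V : Set α) (Qs : List (Quant × Set α)) (P : Program α) :
    aspqListOn V Qs P ≠ [] := by
  simp [aspqListOn]

theorem qlpSat_fixcons_iff_coherent (P : Program α) (Qs : List (Quant × Set α)) {Y W : Set α}
    (hYW : Y ⊆ W) (hQs : Qs.Pairwise fun q q' => Disjoint q.2 q'.2)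
    (hW : ∀ s ∈ Qs, Disjoint W s.2) :
    QLPSat Qs (P ∪ fixcons Y W) ↔
      Coherent (addToHead (fixfact (Sum.inr '' Y) (Sum.inr '' W))
        (aspqListOn (W ∪ ⋃ s ∈ Qs, s.2) Qs P)) ∅ := by
  induction Qs generalizing Y W with
  | nil =>
    simp only [List.not_mem_nil, Set.iUnion_of_empty, Set.iUnion_empty, Set.union_empty]
    exact (satisfiable_aspqFinal_iff hYW).symm.trans (coherent_singleton_ex_empty _).symm
  | cons A Qs ih =>
    obtain ⟨q, X⟩ := A
    have hWX : Disjoint W X := hW _ List.mem_cons_self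
    rw [List.pairwise_cons] at hQs
    rw [qlpSat_cons, addToHead_aspqListOn_cons, coherent_cons _ _ (aspqListOn_ne_nil _ _ _)]
    refine Quant.holds_congr q (fun Z => Sum.inr '' (Y ∪ Z))
      (fun M => stableModel_choiceLayer_iff hWX) fun Z hZX => ?_
    have hV : W ∪ ⋃ s ∈ (q, X) :: Qs, s.2 = W ∪ X ∪ ⋃ s ∈ Qs, s.2 := by
      simp only [List.mem_cons, Set.iUnion_iUnion_eq_or_left, Set.union_assoc]
    rw [progAtoms_choiceLayer hYW, Set.union_assoc P, fixcons_union_fixcons hYW hZX hWX, hV]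
    exact ih (Set.union_subset_union hYW hZX) hQs.2 fun s hs =>
      Set.disjoint_union_left.2 ⟨hW s (List.mem_cons_of_mem _ hs), hQs.1 s hs⟩

end Encoding

end ASP

open ASP in
theorem qlp_sat_iff_aspq_coherent_general {α : Type*} (Qs : List (Quant × Set α)) (P : Program α)
    (hdisj : Qs.Pairwise fun q q' => Disjoint q.2 q'.2) :
    QLPSat Qs P ↔ Coherent (aspqList Qs P) (∅ : Program (α ⊕ α)) := by
  have h := qlpSat_fixcons_iff_coherent P Qs (subset_refl ∅) hdisj fun _ _ => Set.empty_disjoint _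
  rwa [fixcons_empty, Set.union_empty, Set.image_empty, fixfact_empty, addToHead_empty,
    Set.empty_union, ← aspqList_eq_aspqListOn] at h

open ASP in
/-- A QLP `𝒬P` over `𝒜` is satisfiable iff the ASP(Q) program `aspq(𝒬P)` is
coherent. -/
theorem qlp_sat_iff_aspq_coherent {α : Type*} (Qs : List (Quant × Set α)) (P : Program α)
    (hQs : Qs ≠ [])
    (hdisj : Qs.Pairwise fun q q' => Disjoint q.2 q'.2) :
    QLPSat Qs P ↔ Coherent (aspqList Qs P) (∅ : Program (α ⊕ α)) :=
  qlp_sat_iff_aspq_coherent_general Qs P hdisj
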